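/- arXiv:2108.03369 — 2 statements merged into one kernel-verified Lean document; each statement's English description precedes it below -/
import Mathlib

section
/- Let P be an LPOD. Then a four-valued interpretation M is a three-valued answer set of P if and only if M is a consistent ⪯-minimal four-valued model of P and M is solid (assigns T* to no literal). -/
/-! Four truth values F < F* < T* < T. -/
inductive V4 : Type
  | F | Fs | Ts | T
  deriving DecidableEq, Repr

instance : Fintype V4 :=
  ⟨{V4.F, V4.Fs, V4.Ts, V4.T}, fun x => by cases x <;> simp⟩

namespace V4

def toNat : V4 → ℕ
  | F => 0
  | Fs => 1
  | Ts => 2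
  | T => 3

theorem toNat_injective : Function.Injective toNat := by
  intro a b h
  cases a <;> cases b <;> simp_all [toNat]

instance : LinearOrder V4 := LinearOrder.lift' toNat toNat_injective

instance : BoundedOrder V4 where
  top := T
  le_top a := by cases a <;> decide
  bot := F
  bot_le a := by cases a <;> decide

/-- Negation-as-failure: `not φ` is `T` if `φ ≤ F*`, else `F`. -/
def notv (a : V4) : V4 := if a ≤ Fs then T else F

/-- Ordered disjunction on truth values: `u × v = v` if `u = F*`, else `u`. -/
def times (a b : V4) : V4 := if a = Fs then b else a

end V4

variable {α : Type}

/-- A ground literal: an atom together with a polarity (`true` = the atom itself,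
`false` = its strong negation). -/
structure Lit (α : Type) where
  atom : α
  positive : Bool
  deriving DecidableEq

/-- A (four-valued) interpretation assigns a truth value to every literal.
Three-valued interpretations are the `solid` ones (no `T*` value). -/
abbrev Interp (α : Type) := Lit α → V4

/-- `I` is solid (equivalently, three-valued) if it assigns `T*` to no literal. -/
def solid (I : Interp α) : Prop := ∀ l, I l ≠ V4.Ts

/-- `I` is consistent: no atom has both the atom and its strong negation `T`. -/
def consistentI (I : Interp α) : Prop :=
  ∀ a : α, ¬ (I ⟨a, true⟩ = V4.T ∧ I ⟨a, false⟩ = V4.T)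

/-- `I` takes values only in `{F, T}`. -/
def twoValued (I : Interp α) : Prop := ∀ l, I l = V4.F ∨ I l = V4.T

/-- Value of the conjunction of a list of literals. -/
def evalConj (I : Interp α) (L : List (Lit α)) : V4 := (L.map I).foldr min V4.T

/-- Value of the conjunction `not B1 ∧ ⋯ ∧ not Bk`. -/
def evalNegs (I : Interp α) (L : List (Lit α)) : V4 :=
  (L.map (fun b => V4.notv (I b))).foldr min V4.T

/-- Value of the disjunction of a list of literals. -/
def evalDisj (I : Interp α) (L : List (Lit α)) : V4 := (L.map I).foldr max V4.F

/-- Value of an ordered disjunction of the given (nonempty) list of values.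
(`F*` is a right identity for `×`, so the fold computes `v1 × ⋯ × vn`.) -/
def evalOD (vs : List V4) : V4 := vs.foldr V4.times V4.Fs

/-- Pointwise `≤` on interpretations. -/
def interpLE (I J : Interp α) : Prop := ∀ l, I l ≤ J l

/-- The four-valued relation `⪯`: `u ⪯ v` iff `u = v` or `u ≺ v`, where
`F ≺ F*`, `F ≺ T*`, `F ≺ T` and `T* ≺ T`.  On three-valued (solid)
interpretations it restricts to the ordering generated by `F ≺ F*`, `F ≺ T`. -/
def preceq (u v : V4) : Prop :=
  u = v ∨ (u = V4.F ∧ v ≠ V4.F) ∨ (u = V4.Ts ∧ v = V4.T)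

/-- Pointwise `⪯` on interpretations. -/
def interpPreceq (I J : Interp α) : Prop := ∀ l, preceq (I l) (J l)

/-- The set of literals that are `T` in `I`. -/
def collapse (I : Interp α) : Set (Lit α) := { l | I l = V4.T }

/-! ### LPOD rules -/

/-- An LPOD rule `C1 × ⋯ × Cn ← A1,…,Am, not B1,…,not Bk` with head
`c1 :: cs` (so the head is nonempty). -/
structure Rule (α : Type) where
  c1 : Lit α
  cs : List (Lit α)
  pos : List (Lit α)
  neg : List (Lit α)

def Rule.headList (R : Rule α) : List (Lit α) := R.c1 :: R.cs

def Rule.headVal (R : Rule α) (I : Interp α) : V4 := evalOD (R.headList.map I)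

def Rule.bodyVal (R : Rule α) (I : Interp α) : V4 :=
  min (evalConj I R.pos) (evalNegs I R.neg)

/-- `I` satisfies the rule `R` (the rule evaluates to `T`). -/
def ruleSat (I : Interp α) (R : Rule α) : Prop := R.bodyVal I ≤ R.headVal I

/-- `I` is a model of the LPOD `P`. -/
def isModel (I : Interp α) (P : Set (Rule α)) : Prop := ∀ R ∈ P, ruleSat I R

/-! ### The ×-reduct of an LPOD -/

/-- A reduct rule `C ← [F*,] A1,…,Am`; `fstar` records whether the constant `F*`
occurs in the body. -/
structure RedRule (α : Type) where
  head : Lit α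
  pos : List (Lit α)
  fstar : Bool

def RedRule.bodyVal (r : RedRule α) (I : Interp α) : V4 :=
  min (if r.fstar then V4.Fs else V4.T) (evalConj I r.pos)

def redSat (I : Interp α) (r : RedRule α) : Prop := r.bodyVal I ≤ I r.head

def redModel (I : Interp α) (Q : Set (RedRule α)) : Prop := ∀ r ∈ Q, redSat I r

/-- Reduct rules generated by a head `C1,…,Cn`: rules `Cj ← F*, body` for
`j < r` and `Cr ← body`, where `r` is the least index with
`I C1 = ⋯ = I C_{r-1} = F*` and (`r = n` or `I Cr ≠ F*`). -/
def xredHead (I : Interp α) (body : List (Lit α)) : List (Lit α) → List (RedRule α)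
  | [] => []
  | [c] => [⟨c, body, false⟩]
  | c :: c' :: rest =>
    if I c = V4.Fs then ⟨c, body, true⟩ :: xredHead I body (c' :: rest)
    else [⟨c, body, false⟩]

/-- The ×-reduct of a rule w.r.t. `I`. -/
def xredRule (I : Interp α) (R : Rule α) : List (RedRule α) :=
  if ∃ b ∈ R.neg, I b = V4.T then [] else xredHead I R.pos R.headList

/-- The ×-reduct of an LPOD w.r.t. `I`. -/
def xreduct (I : Interp α) (P : Set (Rule α)) : Set (RedRule α) :=
  { r | ∃ R ∈ P, r ∈ xredRule I R }

/-- `M` is a three-valued answer set of the LPOD `P`: a consistent three-valued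
interpretation that is the `≤`-least (three-valued) model of `P^M_×`. -/
def threeAnswerSet (P : Set (Rule α)) (M : Interp α) : Prop :=
  solid M ∧ consistentI M ∧ redModel M (xreduct M P) ∧
  ∀ N : Interp α, solid N → redModel N (xreduct M P) → interpLE M N

/-! ### Two-valued notions: Brewka answer sets and GL answer sets -/

/-- A set of literals is consistent if it contains no complementary pair. -/
def twoConsistent (N : Set (Lit α)) : Prop :=
  ∀ a : α, ¬ (Lit.mk a true ∈ N ∧ Lit.mk a false ∈ N)

/-- `N` is a (two-valued) Brewka-model of the LPOD `P`. -/
def brewkaModel (N : Set (Lit α)) (P : Set (Rule α)) : Prop :=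
  ∀ R ∈ P, (∀ a ∈ R.pos, a ∈ N) → (∀ b ∈ R.neg, b ∉ N) → ∃ c ∈ R.headList, c ∈ N

/-- A positive rule `C ← A1,…,Am`. -/
structure PosRule (α : Type) where
  head : Lit α
  pos : List (Lit α)

/-- `N` is a two-valued model of a positive program. -/
def posModel (N : Set (Lit α)) (Q : Set (PosRule α)) : Prop :=
  ∀ r ∈ Q, (∀ a ∈ r.pos, a ∈ N) → r.head ∈ N

/-- The Brewka ×-reduct of an LPOD w.r.t. a set of literals `N`:
`Ci ← A1,…,Am` whenever `Ci ∈ N` and `N ∩ {C1,…,C_{i-1},B1,…,Bk} = ∅`. -/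
def brewkaReduct (N : Set (Lit α)) (P : Set (Rule α)) : Set (PosRule α) :=
  { r | ∃ R ∈ P, ∃ l1 l2 : List (Lit α),
      R.headList = l1 ++ r.head :: l2 ∧ r.pos = R.pos ∧ r.head ∈ N ∧
      (∀ c ∈ l1, c ∉ N) ∧ (∀ b ∈ R.neg, b ∉ N) }

/-- `N` is a Brewka answer set of the LPOD `P`. -/
def brewkaAnswerSet (P : Set (Rule α)) (N : Set (Lit α)) : Prop :=
  twoConsistent N ∧ brewkaModel N P ∧ posModel N (brewkaReduct N P) ∧
  ∀ N', posModel N' (brewkaReduct N P) → N ⊆ N'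

/-- The Gelfond–Lifschitz reduct of an extended logic program (an LPOD all
of whose rule heads are single literals) w.r.t. a set of literals `N`. -/
def glReduct (P : Set (Rule α)) (N : Set (Lit α)) : Set (PosRule α) :=
  { r | ∃ R ∈ P, (∀ b ∈ R.neg, b ∉ N) ∧ r.head = R.c1 ∧ r.pos = R.pos }

/-- `N` is a standard answer set of the extended logic program `P`: a consistent
set of literals that is the least model of `P^N`. -/
def stdAnswerSet (P : Set (Rule α)) (N : Set (Lit α)) : Prop :=
  twoConsistent N ∧ posModel N (glReduct P N) ∧
  ∀ N', posModel N' (glReduct P N) → N ⊆ N'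

/-! ### DLPODs -/

/-- A DLPOD rule `𝒞1 × ⋯ × 𝒞n ← A1,…,Am, not B1,…,not Bk`, where each `𝒞i`
is a disjunction of literals; the head is `c1 :: cs` (nonempty). -/
structure DRule (α : Type) where
  c1 : List (Lit α)
  cs : List (List (Lit α))
  pos : List (Lit α)
  neg : List (Lit α)

def DRule.headList (R : DRule α) : List (List (Lit α)) := R.c1 :: R.cs

def DRule.headVal (R : DRule α) (I : Interp α) : V4 :=
  evalOD (R.headList.map (evalDisj I))

def DRule.bodyVal (R : DRule α) (I : Interp α) : V4 :=
  min (evalConj I R.pos) (evalNegs I R.neg)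

def dRuleSat (I : Interp α) (R : DRule α) : Prop := R.bodyVal I ≤ R.headVal I

def isDModel (I : Interp α) (P : Set (DRule α)) : Prop := ∀ R ∈ P, dRuleSat I R

/-- A disjunctive reduct rule `𝒞 ← [F*,] A1,…,Am`. -/
structure DRedRule (α : Type) where
  head : List (Lit α)
  pos : List (Lit α)
  fstar : Bool

def DRedRule.bodyVal (r : DRedRule α) (I : Interp α) : V4 :=
  min (if r.fstar then V4.Fs else V4.T) (evalConj I r.pos)

def dredSat (I : Interp α) (r : DRedRule α) : Prop := r.bodyVal I ≤ evalDisj I r.head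

def dredModel (I : Interp α) (Q : Set (DRedRule α)) : Prop := ∀ r ∈ Q, dredSat I r

def dxredHead (I : Interp α) (body : List (Lit α)) :
    List (List (Lit α)) → List (DRedRule α)
  | [] => []
  | [c] => [⟨c, body, false⟩]
  | c :: c' :: rest =>
    if evalDisj I c = V4.Fs then ⟨c, body, true⟩ :: dxredHead I body (c' :: rest)
    else [⟨c, body, false⟩]

/-- The ×-reduct of a DLPOD rule w.r.t. `I`. -/
def dxredRule (I : Interp α) (R : DRule α) : List (DRedRule α) :=
  if ∃ b ∈ R.neg, I b = V4.T then [] else dxredHead I R.pos R.headList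

/-- The ×-reduct of a DLPOD w.r.t. `I`. -/
def dxreduct (I : Interp α) (P : Set (DRule α)) : Set (DRedRule α) :=
  { r | ∃ R ∈ P, r ∈ dxredRule I R }

/-- `M` is an answer set of the DLPOD `P`: a consistent three-valued
interpretation that is a `≤`-minimal (three-valued) model of `P^M_×`. -/
def dAnswerSet (P : Set (DRule α)) (M : Interp α) : Prop :=
  solid M ∧ consistentI M ∧ dredModel M (dxreduct M P) ∧
  ∀ N : Interp α, solid N → dredModel N (dxreduct M P) → interpLE N M → N = M

/-- A positive disjunctive rule `C1 ∨ ⋯ ∨ Cq ← A1,…,Am`. -/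
structure DPosRule (α : Type) where
  head : List (Lit α)
  pos : List (Lit α)

/-- `N` is a two-valued model of a positive disjunctive program. -/
def dposModel (N : Set (Lit α)) (Q : Set (DPosRule α)) : Prop :=
  ∀ r ∈ Q, (∀ a ∈ r.pos, a ∈ N) → ∃ c ∈ r.head, c ∈ N

/-- The Gelfond–Lifschitz reduct of a disjunctive extended logic program (a
DLPOD all of whose rule heads are single disjunctions). -/
def glDReduct (P : Set (DRule α)) (N : Set (Lit α)) : Set (DPosRule α) :=
  { r | ∃ R ∈ P, (∀ b ∈ R.neg, b ∉ N) ∧ r.head = R.c1 ∧ r.pos = R.pos }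

/-- `N` is a standard disjunctive answer set: a consistent set of literals that
is a minimal two-valued model of `P^N`. -/
def stdDAnswerSet (P : Set (DRule α)) (N : Set (Lit α)) : Prop :=
  twoConsistent N ∧ dposModel N (glDReduct P N) ∧
  ∀ N', dposModel N' (glDReduct P N) → N' ⊆ N → N' = N

/-! For a solid `M` and an interpretation `I ⪯ M`, a rule that `M` does not block holds in `I`
exactly when its ×-reduct with respect to `M` does: on the head literals that `M` makes `F*`,
`I` is `F*` or `F`, so `I` evaluates the ordered head either like `M` or to `F`. Models of the
reduct, a Horn program over the constants `F*` and `T`, are closed under pointwise `min` and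
under monotone relabellings `φ` of the truth values with `F* ≤ φ F*` and `φ T = T`.

If `M` is an answer set and `N ⪯ M` is a model of `P`, then `N` models the reduct, hence so does
the solid interpretation obtained by lowering `T*` to `F*` in `N`; lying above `M`, it forces
`N = M`. Conversely, if `M` is a `⪯`-minimal model and `N` models the reduct, then `min M (φ ∘ N)`
is a model of `P` below `M`, hence equal to `M`. For `φ = (· ⊔ T*)` this shows that `N` is `T`
wherever `M` is; given that, `φ` raising `F*` to `T*` yields `M ≤ N`. -/

namespace V4

def lowerTs (v : V4) : V4 := if v = Ts then Fs else v

def raiseFs (v : V4) : V4 := if v = Fs then Ts else v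

theorem lowerTs_monotone : Monotone lowerTs := by
  intro a b; revert a b; unfold lowerTs; decide

theorem lowerTs_ne_Ts (v : V4) : lowerTs v ≠ Ts := by
  revert v; unfold lowerTs; decide

theorem raiseFs_monotone : Monotone raiseFs := by
  intro a b; revert a b; unfold raiseFs; decide

theorem sup_Ts_monotone : Monotone (· ⊔ Ts) := fun _ _ h => sup_le_sup_right h Ts

theorem le_Fs_of_ne_Ts_of_ne_T {a : V4} : a ≠ Ts → a ≠ T → a ≤ Fs := by
  revert a; decide

theorem le_of_preceq {u v : V4} : preceq u v → u ≤ v := by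
  revert u v; unfold preceq; decide

theorem min_T (v : V4) : min T v = v := min_eq_right le_top

theorem le_Fs_iff {u : V4} : u ≤ Fs ↔ u = F ∨ u = Fs := by
  revert u; decide

theorem eq_Fs_of_Fs_preceq {v : V4} : preceq Fs v → v = Fs := by
  revert v; unfold preceq; decide

theorem preceq_min_sup_Ts {m : V4} (n : V4) : m ≠ Ts → preceq (min m (n ⊔ Ts)) m := by
  revert m n; unfold preceq; decide

theorem preceq_min_raiseFs {m : V4} (n : V4) : m ≠ Ts → preceq (min m (raiseFs n)) m := by
  revert m n; unfold preceq raiseFs; decide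

theorem eq_of_preceq_of_le_lowerTs {n m : V4} : preceq n m → m ≠ Ts → m ≤ lowerTs n → n = m := by
  revert n m; unfold preceq lowerTs; decide

theorem eq_T_of_T_le_sup_Ts {n : V4} : T ≤ n ⊔ Ts → n = T := by
  revert n; decide

theorem le_of_le_raiseFs {m n : V4} : m ≠ Ts → m ≤ raiseFs n → m ≤ n := by
  revert m n; unfold raiseFs; decide

theorem evalOD_append_of_forall_eq_Fs {vs : List V4} (ws : List V4) (h : ∀ v ∈ vs, v = Fs) :
    evalOD (vs ++ ws) = evalOD ws := by
  induction vs with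
  | nil => rfl
  | cons v vs ih =>
    rw [List.forall_mem_cons] at h
    simp only [List.cons_append, evalOD, List.foldr_cons, times, if_pos h.1]
    exact ih h.2

theorem evalOD_append_of_F_mem {vs : List V4} (ws : List V4) (hle : ∀ v ∈ vs, v ≤ Fs)
    (hF : F ∈ vs) : evalOD (vs ++ ws) = F := by
  induction vs with
  | nil => simp at hF
  | cons v vs ih =>
    rw [List.forall_mem_cons] at hle
    rcases le_Fs_iff.1 hle.1 with rfl | rfl
    · rfl
    · exact ih hle.2 ((List.mem_cons.1 hF).resolve_left (by decide))

theorem evalOD_cons_of_eq_Fs_imp {v : V4} {ws : List V4} (h : v = Fs → ws = []) :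
    evalOD (v :: ws) = v := by
  by_cases hv : v = Fs
  · rw [h hv, hv]; rfl
  · simp only [evalOD, List.foldr_cons, times, if_neg hv]

end V4

open V4

theorem evalConj_mono {I J : Interp α} (h : I ≤ J) (L : List (Lit α)) :
    evalConj I L ≤ evalConj J L := by
  induction L with
  | nil => exact le_rfl
  | cons a L ih => exact min_le_min (h a) ih

theorem evalConj_comp {φ : V4 → V4} (hφ : Monotone φ) (hT : φ T = T) (I : Interp α)
    (L : List (Lit α)) : evalConj (φ ∘ I) L = φ (evalConj I L) := by
  induction L with
  | nil => exact hT.symm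
  | cons a L ih =>
    simp only [evalConj, List.map_cons, List.foldr_cons] at ih ⊢
    rw [ih, hφ.map_min]
    rfl

theorem evalNegs_eq_T {I : Interp α} {L : List (Lit α)} (h : ∀ b ∈ L, I b ≤ Fs) :
    evalNegs I L = T :=
  le_antisymm le_top <| List.le_min_of_forall_le _ _ fun v hv => by
    obtain ⟨b, hb, rfl⟩ := List.mem_map.1 hv
    rw [notv, if_pos (h b hb)]

theorem Rule.bodyVal_eq_evalConj {I : Interp α} {R : Rule α} (h : ∀ b ∈ R.neg, I b ≤ Fs) :
    R.bodyVal I = evalConj I R.pos := by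
  rw [Rule.bodyVal, evalNegs_eq_T h, min_comm, min_T]

theorem ruleSat_of_mem_neg {I : Interp α} {R : Rule α} {b : Lit α} (hb : b ∈ R.neg)
    (h : Fs < I b) : ruleSat I R := by
  have hneg : evalNegs I R.neg ≤ F :=
    List.min_le_of_le (List.mem_map_of_mem hb) (by rw [notv, if_neg h.not_ge])
  exact (min_le_right _ _).trans (hneg.trans bot_le)

theorem RedRule.bodyVal_mono (r : RedRule α) {I J : Interp α} (h : I ≤ J) :
    r.bodyVal I ≤ r.bodyVal J :=
  min_le_min le_rfl (evalConj_mono h r.pos)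

theorem RedRule.bodyVal_comp (r : RedRule α) {φ : V4 → V4} (hφ : Monotone φ) (hFs : Fs ≤ φ Fs)
    (hT : φ T = T) (I : Interp α) : r.bodyVal (φ ∘ I) ≤ φ (r.bodyVal I) := by
  have hconst : (if r.fstar then Fs else T) ≤ φ (if r.fstar then Fs else T) := by
    split_ifs
    · exact hFs
    · exact hT.ge
  rw [RedRule.bodyVal, RedRule.bodyVal, evalConj_comp hφ hT, hφ.map_min]
  exact min_le_min hconst le_rfl

theorem redSat_of_evalConj_le {I : Interp α} {r : RedRule α} (h : evalConj I r.pos ≤ I r.head) :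
    redSat I r :=
  (min_le_right _ _).trans h

theorem redSat_true_iff {I : Interp α} {c : Lit α} {pos : List (Lit α)} :
    redSat I ⟨c, pos, true⟩ ↔ min Fs (evalConj I pos) ≤ I c := Iff.rfl

theorem redSat_false_iff {I : Interp α} {c : Lit α} {pos : List (Lit α)} :
    redSat I ⟨c, pos, false⟩ ↔ evalConj I pos ≤ I c := by
  rw [redSat, RedRule.bodyVal, if_neg Bool.false_ne_true, min_T]

theorem redModel_inf {I J : Interp α} {Q : Set (RedRule α)} (hI : redModel I Q)
    (hJ : redModel J Q) : redModel (I ⊓ J) Q := fun r hr =>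
  le_inf ((r.bodyVal_mono inf_le_left).trans (hI r hr))
    ((r.bodyVal_mono inf_le_right).trans (hJ r hr))

theorem redModel_comp {I : Interp α} {Q : Set (RedRule α)} {φ : V4 → V4} (hφ : Monotone φ)
    (hFs : Fs ≤ φ Fs) (hT : φ T = T) (hI : redModel I Q) : redModel (φ ∘ I) Q := fun r hr =>
  (r.bodyVal_comp hφ hFs hT I).trans (hφ (hI r hr))

theorem xredHead_cons (M : Interp α) (pos : List (Lit α)) (c : Lit α) (cs : List (Lit α)) :
    ∃ l₁ c' l₂, c :: cs = l₁ ++ c' :: l₂ ∧ (∀ x ∈ l₁, M x = Fs) ∧ (M c' = Fs → l₂ = []) ∧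
      xredHead M pos (c :: cs) =
        l₁.map (fun x => (⟨x, pos, true⟩ : RedRule α)) ++ [⟨c', pos, false⟩] := by
  induction cs generalizing c with
  | nil => exact ⟨[], c, [], rfl, by simp, fun _ => rfl, rfl⟩
  | cons d ds ih =>
    by_cases h : M c = Fs
    · obtain ⟨l₁, c', l₂, heq, hl₁, hl₂, hred⟩ := ih d
      refine ⟨c :: l₁, c', l₂, by rw [heq]; rfl, List.forall_mem_cons.2 ⟨h, hl₁⟩, hl₂, ?_⟩
      rw [xredHead, if_pos h, hred]
      rfl
    · exact ⟨[], c, d :: ds, rfl, by simp, fun h' => absurd h' h, by rw [xredHead, if_neg h]; rfl⟩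

theorem xredRule_of_forall_ne_T {M : Interp α} {R : Rule α} (h : ∀ b ∈ R.neg, M b ≠ T) :
    xredRule M R = xredHead M R.pos R.headList :=
  if_neg fun ⟨b, hb, hbT⟩ => h b hb hbT

theorem xredRule_eq_nil {M : Interp α} {R : Rule α} {b : Lit α} (hb : b ∈ R.neg) (h : M b = T) :
    xredRule M R = [] :=
  if_pos ⟨b, hb, h⟩

theorem ruleSat_iff_forall_redSat {M I : Interp α} {R : Rule α} (hsol : solid M)
    (hI : interpPreceq I M) (hR : ∀ b ∈ R.neg, M b ≠ T) :
    ruleSat I R ↔ ∀ r ∈ xredRule M R, redSat I r := by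
  obtain ⟨l₁, c, l₂, hhead, hl₁, hl₂, hred⟩ := xredHead_cons M R.pos R.c1 R.cs
  have hbody : R.bodyVal I = evalConj I R.pos := Rule.bodyVal_eq_evalConj fun b hb =>
    (le_of_preceq (hI b)).trans (le_Fs_of_ne_Ts_of_ne_T (hsol b) (hR b hb))
  have hIl₁ : ∀ x ∈ l₁, I x ≤ Fs := fun x hx => hl₁ x hx ▸ le_of_preceq (hI x)
  rw [ruleSat, hbody, Rule.headVal, xredRule_of_forall_ne_T hR, Rule.headList, hred, hhead,
    List.map_append, List.map_cons, List.forall_mem_append, List.forall_mem_map,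
    List.forall_mem_singleton, redSat_false_iff]
  by_cases hF : ∃ x ∈ l₁, I x = F
  · obtain ⟨x, hx, hIx⟩ := hF
    rw [evalOD_append_of_F_mem _ (List.forall_mem_map.2 hIl₁) (List.mem_map.2 ⟨x, hx, hIx⟩)]
    refine ⟨fun h => ⟨fun j _ => redSat_of_evalConj_le (h.trans bot_le), h.trans bot_le⟩,
      fun h => ?_⟩
    have hx := redSat_true_iff.1 (h.1 x hx)
    rw [hIx, min_le_iff] at hx
    exact hx.resolve_left (by decide)
  · push Not at hF
    have hFs : ∀ x ∈ l₁, I x = Fs := fun x hx => (le_Fs_iff.1 (hIl₁ x hx)).resolve_left (hF x hx)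
    rw [evalOD_append_of_forall_eq_Fs _ (List.forall_mem_map.2 hFs),
      evalOD_cons_of_eq_Fs_imp fun h => by rw [hl₂ (eq_Fs_of_Fs_preceq (h ▸ hI c)), List.map_nil]]
    exact ⟨fun h => ⟨fun x hx => (min_le_left _ _).trans (hFs x hx).ge, h⟩, And.right⟩

theorem redModel_xreduct_iff {I M : Interp α} {P : Set (Rule α)} :
    redModel I (xreduct M P) ↔ ∀ R ∈ P, ∀ r ∈ xredRule M R, redSat I r :=
  ⟨fun h R hR r hr => h r ⟨R, hR, hr⟩, fun h _ ⟨R, hR, hr⟩ => h R hR _ hr⟩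

theorem isModel_of_redModel_of_preceq {M K : Interp α} {P : Set (Rule α)} (hsol : solid M)
    (hK : interpPreceq K M) (hblock : ∀ l, M l = T → Fs < K l) (hred : redModel K (xreduct M P)) :
    isModel K P := by
  intro R hR
  by_cases hneg : ∃ b ∈ R.neg, M b = T
  · obtain ⟨b, hb, hbT⟩ := hneg
    exact ruleSat_of_mem_neg hb (hblock b hbT)
  · push Not at hneg
    exact (ruleSat_iff_forall_redSat hsol hK hneg).2 (redModel_xreduct_iff.1 hred R hR)

theorem redModel_of_isModel_of_preceq {M K : Interp α} {P : Set (Rule α)} (hsol : solid M)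
    (hK : interpPreceq K M) (hmod : isModel K P) : redModel K (xreduct M P) := by
  refine redModel_xreduct_iff.2 fun R hR => ?_
  by_cases hneg : ∃ b ∈ R.neg, M b = T
  · obtain ⟨b, hb, hbT⟩ := hneg
    simp [xredRule_eq_nil hb hbT]
  · push Not at hneg
    exact (ruleSat_iff_forall_redSat hsol hK hneg).1 (hmod R hR)

theorem isModel_iff_redModel {M : Interp α} {P : Set (Rule α)} (hsol : solid M) :
    isModel M P ↔ redModel M (xreduct M P) :=
  ⟨redModel_of_isModel_of_preceq hsol fun _ => Or.inl rfl,
    isModel_of_redModel_of_preceq hsol (fun _ => Or.inl rfl) fun l h => h ▸ by decide⟩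

theorem eq_of_isModel_of_preceq {M N : Interp α} {P : Set (Rule α)} (hsol : solid M)
    (hleast : ∀ K : Interp α, solid K → redModel K (xreduct M P) → interpLE M K)
    (hN : isModel N P) (hNM : interpPreceq N M) : N = M := by
  have hredN : redModel (lowerTs ∘ N) (xreduct M P) :=
    redModel_comp lowerTs_monotone (by decide) rfl (redModel_of_isModel_of_preceq hsol hNM hN)
  have hle := hleast _ (fun l => lowerTs_ne_Ts (N l)) hredN
  funext l
  exact eq_of_preceq_of_le_lowerTs (hNM l) (hsol l) (hle l)

theorem le_comp_of_preceq_minimal {M N : Interp α} {P : Set (Rule α)} (hsol : solid M)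
    (hmod : isModel M P) (hmin : ∀ K : Interp α, isModel K P → interpPreceq K M → K = M)
    (hN : redModel N (xreduct M P)) {φ : V4 → V4} (hφ : Monotone φ) (hFs : Fs ≤ φ Fs)
    (hT : φ T = T) (hprec : interpPreceq (M ⊓ φ ∘ N) M) (hblock : ∀ l, M l = T → Fs < φ (N l)) :
    M ≤ φ ∘ N := by
  have hred : redModel (M ⊓ φ ∘ N) (xreduct M P) :=
    redModel_inf ((isModel_iff_redModel hsol).1 hmod) (redModel_comp hφ hFs hT hN)
  have hblockK : ∀ l, M l = T → Fs < (M ⊓ φ ∘ N) l := fun l hl => by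
    rw [Pi.inf_apply, hl, Function.comp_apply]
    exact lt_inf_iff.2 ⟨by decide, hblock l hl⟩
  have hK : isModel (M ⊓ φ ∘ N) P := isModel_of_redModel_of_preceq hsol hprec hblockK hred
  rw [← hmin _ hK hprec]
  exact inf_le_right

theorem le_of_redModel_of_preceq_minimal {M N : Interp α} {P : Set (Rule α)} (hsol : solid M)
    (hmod : isModel M P) (hmin : ∀ K : Interp α, isModel K P → interpPreceq K M → K = M)
    (hN : redModel N (xreduct M P)) : interpLE M N := by
  have hT : ∀ l, M l = T → N l = T := fun l hl => eq_T_of_T_le_sup_Ts <| hl ▸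
    le_comp_of_preceq_minimal hsol hmod hmin hN sup_Ts_monotone (by decide) rfl
      (fun l => preceq_min_sup_Ts _ (hsol l)) (fun _ _ => lt_sup_of_lt_right (by decide)) l
  have hle := le_comp_of_preceq_minimal hsol hmod hmin hN raiseFs_monotone (by decide) rfl
    (fun l => preceq_min_raiseFs _ (hsol l)) (fun l hl => by rw [hT l hl]; decide)
  exact fun l => le_of_le_raiseFs (hsol l) (hle l)

/-- A four-valued interpretation is a three-valued answer set of
an LPOD `P` iff it is a consistent, solid, `⪯`-minimal four-valued model of `P`. -/
theorem threeAnswerSet_iff_preceq_minimal_solid {α : Type} (P : Set (Rule α))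
    (M : Interp α) :
    threeAnswerSet P M ↔
      (consistentI M ∧ solid M ∧ isModel M P ∧
        ∀ N : Interp α, isModel N P → interpPreceq N M → N = M) := by
  constructor
  · rintro ⟨hsol, hcons, hred, hleast⟩
    exact ⟨hcons, hsol, (isModel_iff_redModel hsol).2 hred,
      fun N hN hNM => eq_of_isModel_of_preceq hsol hleast hN hNM⟩
  · rintro ⟨hcons, hsol, hmod, hmin⟩
    exact ⟨hsol, hcons, (isModel_iff_redModel hsol).1 hmod,
      fun N _ hN => le_of_redModel_of_preceq_minimal hsol hmod hmin hN⟩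
end

section
/- Let P be an LPOD and let M1, M2 be three-valued answer sets of P such that collapse(M1) = collapse(M2). Then M1 = M2. -/
variable {α : Type}

/-!
The pointwise minimum `M1 ⊓ M2` of two answer sets with the same collapse is again a model of the
reduct `P^{M1}_×`; since `M1` is its least model, `M1 ≤ M1 ⊓ M2 ≤ M2`, and equality follows by
symmetry. The only delicate reduct rules are those whose head `C` is `F` in `M2`: walking along the
ordered head up to `C`, every earlier literal is `F*` in `M1`, hence not `T` in `M2`, so the
first literal that is not `F*` in `M2` is `F` there and heads a rule of `P^{M2}_×` without `F*`
in its body. As `M2` satisfies that rule, the positive body is `F` in `M2`.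
-/

namespace V4

theorem lt_Fs_iff {a : V4} : a < Fs ↔ a = F := by
  cases a <;> decide

theorem Fs_le_of_ne_F {a : V4} (h : a ≠ F) : Fs ≤ a :=
  not_lt.1 (mt lt_Fs_iff.1 h)

theorem le_Fs_of_ne {a : V4} (hTs : a ≠ Ts) (hT : a ≠ T) : a ≤ Fs := by
  cases a <;> first | decide | contradiction

end V4

section

variable {P : Set (Rule α)} {I J M1 M2 : Interp α}

theorem solid.inf (hI : solid I) (hJ : solid J) : solid (I ⊓ J) := fun l => by
  change min (I l) (J l) ≠ V4.Ts
  rcases min_choice (I l) (J l) with h | h <;> rw [h]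
  exacts [hI l, hJ l]

theorem solid.le_Fs (hI : solid I) {l : Lit α} (h : I l ≠ V4.T) : I l ≤ V4.Fs :=
  V4.le_Fs_of_ne (hI l) h

theorem eq_T_iff_of_collapse_eq (h : collapse I = collapse J) (l : Lit α) :
    I l = V4.T ↔ J l = V4.T :=
  Set.ext_iff.1 h l

theorem evalConj_inf (L : List (Lit α)) :
    evalConj (I ⊓ J) L = min (evalConj I L) (evalConj J L) := by
  induction L with
  | nil => exact (min_self _).symm
  | cons a L ih =>
    change min (min (I a) (J a)) (evalConj (I ⊓ J) L)
      = min (min (I a) (evalConj I L)) (min (J a) (evalConj J L))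
    rw [ih, min_min_min_comm]

theorem RedRule.bodyVal_inf (r : RedRule α) :
    r.bodyVal (I ⊓ J) = min (r.bodyVal I) (r.bodyVal J) := by
  simp only [RedRule.bodyVal, evalConj_inf]
  rw [min_min_min_comm, min_self]

theorem mem_xredRule {R : Rule α} {r : RedRule α} :
    r ∈ xredRule I R ↔ (∀ b ∈ R.neg, I b ≠ V4.T) ∧ r ∈ xredHead I R.pos R.headList := by
  unfold xredRule
  split_ifs with hneg <;> simp_all

theorem mem_xredHead {body heads : List (Lit α)} {r : RedRule α}
    (hr : r ∈ xredHead I body heads) :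
    r.pos = body ∧ ∃ l1 l2, heads = l1 ++ r.head :: l2 ∧ ∀ e ∈ l1, I e = V4.Fs := by
  induction heads with
  | nil => simp [xredHead] at hr
  | cons c rest ih =>
    rcases rest with _ | ⟨c', rest⟩
    · rw [xredHead, List.mem_singleton] at hr
      subst hr
      exact ⟨rfl, [], [], rfl, by simp⟩
    by_cases hc : I c = V4.Fs
    · rw [xredHead, if_pos hc, List.mem_cons] at hr
      rcases hr with rfl | hr
      · exact ⟨rfl, [], _, rfl, by simp⟩
      obtain ⟨hpos, l1, l2, hsplit, hl1⟩ := ih hr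
      exact ⟨hpos, c :: l1, l2, by rw [hsplit]; rfl, List.forall_mem_cons.2 ⟨hc, hl1⟩⟩
    · rw [xredHead, if_neg hc, List.mem_singleton] at hr
      subst hr
      exact ⟨rfl, [], _, rfl, by simp⟩

theorem mem_xredHead_append_cons {body l1 l2 : List (Lit α)} {d : Lit α}
    (hl1 : ∀ e ∈ l1, I e = V4.Fs) (hd : I d ≠ V4.Fs) :
    ⟨d, body, false⟩ ∈ xredHead I body (l1 ++ d :: l2) := by
  induction l1 with
  | nil => cases l2 <;> simp [xredHead, hd]
  | cons e l1 ih =>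
    obtain ⟨x, xs, hx⟩ := List.exists_cons_of_ne_nil (List.append_ne_nil_of_right_ne_nil l1
      (List.cons_ne_nil d l2))
    rw [List.cons_append, hx, xredHead, if_pos (hl1 e List.mem_cons_self), ← hx]
    exact List.mem_cons_of_mem _ (ih fun x hx => hl1 x (List.mem_cons_of_mem e hx))

theorem exists_mem_xredHead_of_eq_F {body l1 l2 : List (Lit α)} {c : Lit α}
    (hc : I c = V4.F) (hl1 : ∀ e ∈ l1, I e ≤ V4.Fs) :
    ∃ d, I d = V4.F ∧ ⟨d, body, false⟩ ∈ xredHead I body (l1 ++ c :: l2) := by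
  obtain ⟨d, hfind⟩ : ∃ d, (l1 ++ [c]).find? (fun e => I e ≠ V4.Fs) = some d :=
    Option.isSome_iff_exists.1 (List.find?_isSome.2 ⟨c, by simp, by simp [hc]⟩)
  obtain ⟨hdFs, p, q, hsplit, hp⟩ := List.find?_eq_some_iff_append.1 hfind
  have hdF : I d = V4.F := by
    have hd : d ∈ l1 ++ [c] := hsplit ▸ List.mem_append_right p List.mem_cons_self
    have hle : I d ≤ V4.Fs := by
      rcases List.mem_append.1 hd with hd | hd
      · exact hl1 d hd
      · rw [List.mem_singleton.1 hd, hc]; decide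
    exact V4.lt_Fs_iff.1 (lt_of_le_of_ne hle (by simpa using hdFs))
  refine ⟨d, hdF, ?_⟩
  have hsplit' : l1 ++ c :: l2 = p ++ d :: (q ++ l2) := by
    rw [← List.singleton_append, ← List.append_assoc, hsplit]; simp
  rw [hsplit']
  exact mem_xredHead_append_cons (by simpa using hp) (by simpa using hdFs)

theorem min_bodyVal_le_head_of_mem_xreduct (s1 : solid M1) (s2 : solid M2)
    (h : collapse M1 = collapse M2) (m1 : redModel M1 (xreduct M1 P))
    (m2 : redModel M2 (xreduct M2 P)) {r : RedRule α} (hr : r ∈ xreduct M1 P) :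
    min (r.bodyVal M1) (r.bodyVal M2) ≤ M2 r.head := by
  obtain ⟨R, hRP, hrR⟩ := hr
  have hsat1 : r.bodyVal M1 ≤ M1 r.head := m1 r ⟨R, hRP, hrR⟩
  obtain ⟨hneg, hrR⟩ := mem_xredRule.1 hrR
  obtain ⟨hpos, l1, l2, hsplit, hl1⟩ := mem_xredHead hrR
  by_cases hF : M2 r.head = V4.F
  · have hl1' : ∀ e ∈ l1, M2 e ≤ V4.Fs := fun e he =>
      s2.le_Fs fun hT => absurd ((eq_T_iff_of_collapse_eq h e).2 hT) (by rw [hl1 e he]; decide)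
    obtain ⟨d, hdF, hd⟩ := exists_mem_xredHead_of_eq_F (body := R.pos) (l2 := l2) hF hl1'
    have hneg2 : ∀ b ∈ R.neg, M2 b ≠ V4.T := fun b hb =>
      (eq_T_iff_of_collapse_eq h b).not.1 (hneg b hb)
    have hsat2 := m2 _ ⟨R, hRP, mem_xredRule.2 ⟨hneg2, hsplit ▸ hd⟩⟩
    calc min (r.bodyVal M1) (r.bodyVal M2) ≤ r.bodyVal M2 := min_le_right _ _
      _ ≤ evalConj M2 r.pos := min_le_right _ _
      _ = RedRule.bodyVal ⟨d, R.pos, false⟩ M2 := by rw [hpos]; exact (min_eq_right le_top).symm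
      _ ≤ M2 d := hsat2
      _ = M2 r.head := hdF.trans hF.symm
  rcases eq_or_ne (M2 r.head) V4.T with hT | hT
  · exact hT ▸ le_top
  calc min (r.bodyVal M1) (r.bodyVal M2) ≤ r.bodyVal M1 := min_le_left _ _
    _ ≤ M1 r.head := hsat1
    _ ≤ V4.Fs := s1.le_Fs ((eq_T_iff_of_collapse_eq h _).not.2 hT)
    _ ≤ M2 r.head := V4.Fs_le_of_ne_F hF

theorem redModel_inf_xreduct (s1 : solid M1) (s2 : solid M2) (h : collapse M1 = collapse M2)
    (m1 : redModel M1 (xreduct M1 P)) (m2 : redModel M2 (xreduct M2 P)) :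
    redModel (M1 ⊓ M2) (xreduct M1 P) := fun r hr => by
  change r.bodyVal (M1 ⊓ M2) ≤ min (M1 r.head) (M2 r.head)
  rw [RedRule.bodyVal_inf]
  exact le_min ((min_le_left _ _).trans (m1 r hr))
    (min_bodyVal_le_head_of_mem_xreduct s1 s2 h m1 m2 hr)

theorem threeAnswerSet.le_of_collapse_eq (h1 : threeAnswerSet P M1) (h2 : threeAnswerSet P M2)
    (h : collapse M1 = collapse M2) : interpLE M1 M2 := by
  obtain ⟨s1, -, m1, least1⟩ := h1
  obtain ⟨s2, -, m2, -⟩ := h2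
  have hle := least1 _ (s1.inf s2) (redModel_inf_xreduct s1 s2 h m1 m2)
  exact fun l => (hle l).trans (min_le_right _ _)

end

/-- Two three-valued answer sets of an LPOD with the same
collapse are equal. -/
theorem threeAnswerSet_eq_of_collapse_eq {α : Type} (P : Set (Rule α))
    (M1 M2 : Interp α) (h1 : threeAnswerSet P M1) (h2 : threeAnswerSet P M2)
    (h : collapse M1 = collapse M2) : M1 = M2 :=
  funext fun l => le_antisymm (h1.le_of_collapse_eq h2 h l) (h2.le_of_collapse_eq h1 h.symm l)
end
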